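/- Let X be a standard normal random variable (law N(0,1)), let T > 0, h > 0, x ∈ ℝ, and let E : ℝ → ℝ be L-Lipschitz continuous. Then | E[ X² · min{1, exp( −(E(x + hX) − E(x))/T )} ] − 1 | ≤ (L h / T) · E[|X|³] = 2√(2/π) · L h / T. -/

import Mathlib

open MeasureTheory ProbabilityTheory

section SAHelpers

open Real Filter Set
open scoped ENNReal NNReal Topology

private lemma SA.pdf_eq (y : ℝ) :
    gaussianPDFReal 0 1 y = (Real.sqrt (2 * π))⁻¹ * Real.exp (-(1/2) * y ^ 2) := by
  simp only [gaussianPDFReal, NNReal.coe_one, mul_one, sub_zero]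
  congr 1
  ring

private lemma SA.pdf_nonneg (y : ℝ) : 0 ≤ gaussianPDFReal 0 1 y :=
  gaussianPDFReal_nonneg 0 1 y

private lemma SA.integral_gaussian_eq (g : ℝ → ℝ) :
    ∫ y, g y ∂(gaussianReal 0 1) = ∫ y, gaussianPDFReal 0 1 y * g y := by
  rw [gaussianReal_of_var_ne_zero 0 one_ne_zero]
  have h : gaussianPDF 0 1 = fun y => ((gaussianPDFReal 0 1 y).toNNReal : ℝ≥0∞) := rfl
  rw [h, integral_withDensity_eq_integral_smul
    ((measurable_gaussianPDFReal 0 1).real_toNNReal) g]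
  congr 1; funext y
  simp [NNReal.smul_def, Real.coe_toNNReal _ (gaussianPDFReal_nonneg 0 1 y)]

private lemma SA.min_one_exp_lip (z : ℝ) : |min 1 (Real.exp z) - 1| ≤ |z| := by
  rcases le_or_gt 0 z with hz | hz
  · rw [min_eq_left (Real.one_le_exp hz)]
    simp [abs_nonneg]
  · rw [min_eq_right (Real.exp_le_one_iff.mpr hz.le)]
    rw [abs_of_nonpos (by linarith [Real.exp_le_one_iff.mpr hz.le] : Real.exp z - 1 ≤ 0),
      abs_of_neg hz]
    linarith [Real.add_one_le_exp z]

private lemma SA.int_pow (s : ℕ) :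
    Integrable fun y : ℝ => y ^ s * Real.exp (-(1/2) * y ^ 2) := by
  have := integrable_rpow_mul_exp_neg_mul_sq (b := 1/2) (by norm_num)
    (s := (s : ℝ)) (by exact lt_of_lt_of_le (by norm_num) (Nat.cast_nonneg s))
  simpa [Real.rpow_natCast] using this

private lemma SA.int_e : Integrable fun y : ℝ => Real.exp (-(1/2) * y ^ 2) :=
  integrable_exp_neg_mul_sq (by norm_num)

private lemma SA.int_abs3 :
    Integrable fun y : ℝ => |y| ^ 3 * Real.exp (-(1/2) * y ^ 2) := by
  refine (SA.int_pow 3).abs.congr (Filter.EventuallyEq.of_eq (funext fun y => ?_))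
  rw [abs_mul, abs_pow, abs_of_pos (Real.exp_pos _)]

private lemma SA.J2 : ∫ y : ℝ, y ^ 2 * Real.exp (-(1/2) * y ^ 2) = Real.sqrt (2 * π) := by
  have hderiv : ∀ y : ℝ, HasDerivAt (fun y : ℝ => -y * Real.exp (-(1/2) * y ^ 2))
      (y ^ 2 * Real.exp (-(1/2) * y ^ 2) - Real.exp (-(1/2) * y ^ 2)) y := by
    intro y
    have h1 : HasDerivAt (fun y : ℝ => -(1/2) * y ^ 2) (-(1/2) * (2 * y)) y :=
      (hasDerivAt_pow 2 y).const_mul _ |>.congr_deriv (by simp)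
    have h2 := h1.exp
    have h3 : HasDerivAt (fun y : ℝ => -y) (-1) y := (hasDerivAt_id y).neg
    have := h3.mul h2
    exact this.congr_deriv (by ring)
  have hint : Integrable fun y : ℝ =>
      y ^ 2 * Real.exp (-(1/2) * y ^ 2) - Real.exp (-(1/2) * y ^ 2) :=
    (SA.int_pow 2).sub SA.int_e
  have hF : Integrable fun y : ℝ => -y * Real.exp (-(1/2) * y ^ 2) := by
    exact ((SA.int_pow 1).neg).congr
      (Filter.EventuallyEq.of_eq (funext fun y => by simp only [Pi.neg_apply]; ring))
  have h0 := integral_eq_zero_of_hasDerivAt_of_integrable hderiv hint hF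
  rw [integral_sub (SA.int_pow 2) SA.int_e, sub_eq_zero] at h0
  rw [h0, integral_gaussian]
  rw [show π / (1/2 : ℝ) = 2 * π by ring]

private lemma SA.J3 : ∫ y : ℝ in Ioi (0:ℝ), y ^ 3 * Real.exp (-(1/2) * y ^ 2) = 2 := by
  have hderiv : ∀ y : ℝ, y ∈ Ici (0:ℝ) →
      HasDerivAt (fun y : ℝ => -(y ^ 2 + 2) * Real.exp (-(1/2) * y ^ 2))
        (y ^ 3 * Real.exp (-(1/2) * y ^ 2)) y := by
    intro y _
    have h1 : HasDerivAt (fun y : ℝ => -(1/2) * y ^ 2) (-(1/2) * (2 * y)) y :=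
      (hasDerivAt_pow 2 y).const_mul _ |>.congr_deriv (by simp)
    have h2 := h1.exp
    have h3 : HasDerivAt (fun y : ℝ => -(y ^ 2 + 2)) (-(2 * y)) y := by
      have := ((hasDerivAt_pow 2 y).add_const 2).neg
      exact this.congr_deriv (by simp)
    have := h3.mul h2
    exact this.congr_deriv (by ring)
  have htop : Tendsto (fun y : ℝ => -(y ^ 2 + 2) * Real.exp (-(1/2) * y ^ 2))
      atTop (𝓝 0) := by
    have hG : Tendsto (fun t : ℝ => -((2 * t + 2) * Real.exp (-t))) atTop (𝓝 0) := by
      have h1 := Real.tendsto_pow_mul_exp_neg_atTop_nhds_zero 1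
      have h0 := Real.tendsto_exp_neg_atTop_nhds_zero
      have := ((h1.const_mul 2).add (h0.const_mul 2)).neg
      simpa [add_mul, mul_assoc] using this
    have hsq : Tendsto (fun y : ℝ => y ^ 2 / 2) atTop atTop :=
      (tendsto_pow_atTop two_ne_zero).atTop_div_const (by norm_num)
    have := hG.comp hsq
    convert this using 2 with y
    simp only [Function.comp_apply]
    rw [show -(1/2 : ℝ) * y ^ 2 = -(y ^ 2 / 2) by ring]
    ring
  have h := integral_Ioi_of_hasDerivAt_of_tendsto' hderiv
    ((SA.int_pow 3).integrableOn) htop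
  rw [h]
  norm_num

private lemma SA.Jabs3 : ∫ y : ℝ, |y| ^ 3 * Real.exp (-(1/2) * y ^ 2) = 4 := by
  have h := integral_comp_abs (f := fun y : ℝ => y ^ 3 * Real.exp (-(1/2) * y ^ 2))
  rw [SA.J3] at h
  simp only [sq_abs] at h
  rw [h]; norm_num

private lemma SA.moment2 : ∫ y : ℝ, gaussianPDFReal 0 1 y * y ^ 2 = 1 := by
  calc ∫ y : ℝ, gaussianPDFReal 0 1 y * y ^ 2
      = ∫ y : ℝ, (Real.sqrt (2 * π))⁻¹ * (y ^ 2 * Real.exp (-(1/2) * y ^ 2)) := by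
        congr 1; funext y; rw [SA.pdf_eq]; ring
    _ = (Real.sqrt (2 * π))⁻¹ * Real.sqrt (2 * π) := by
        rw [integral_const_mul, SA.J2]
    _ = 1 := inv_mul_cancel₀ (by positivity)

private lemma SA.moment3 :
    ∫ y : ℝ, gaussianPDFReal 0 1 y * |y| ^ 3 = 2 * Real.sqrt (2 / π) := by
  have hcalc : (Real.sqrt (2 * π))⁻¹ * 4 = 2 * Real.sqrt (2 / π) := by
    rw [Real.sqrt_mul (by norm_num : (0:ℝ) ≤ 2), Real.sqrt_div (by norm_num : (0:ℝ) ≤ 2)]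
    have h2 : (0:ℝ) < Real.sqrt 2 := Real.sqrt_pos.mpr (by norm_num)
    have hpi : (0:ℝ) < Real.sqrt π := Real.sqrt_pos.mpr Real.pi_pos
    field_simp
    nlinarith [Real.sq_sqrt (by norm_num : (0:ℝ) ≤ 2)]
  calc ∫ y : ℝ, gaussianPDFReal 0 1 y * |y| ^ 3
      = ∫ y : ℝ, (Real.sqrt (2 * π))⁻¹ * (|y| ^ 3 * Real.exp (-(1/2) * y ^ 2)) := by
        congr 1; funext y; rw [SA.pdf_eq]; ring
    _ = (Real.sqrt (2 * π))⁻¹ * 4 := by rw [integral_const_mul, SA.Jabs3]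
    _ = 2 * Real.sqrt (2 / π) := hcalc

end SAHelpers

/-- Second-moment estimate in the diffusion scaling limit of Simulated Annealing:
for `X ~ N(0,1)`, `T > 0`, `h > 0`, and `E : ℝ → ℝ` `L`-Lipschitz,
`|𝔼[X² · min{1, exp(−(E(x+hX) − E(x))/T)}] − 1| ≤ (Lh/T) · 𝔼[|X|³] = 2√(2/π) · Lh/T`. -/
theorem sa_diffusion_coefficient_estimate (T h : ℝ) (hT : 0 < T) (hh : 0 < h) (x : ℝ)
    (L : ℝ) (hL : 0 ≤ L) (E : ℝ → ℝ)
    (hE_lip : ∀ u v : ℝ, |E u - E v| ≤ L * |u - v|) :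
    |(∫ X, X ^ 2 * min 1 (Real.exp (-(E (x + h * X) - E x) / T))
        ∂(gaussianReal 0 1)) - 1|
      ≤ L * h / T * ∫ X, |X| ^ 3 ∂(gaussianReal 0 1)
    ∧ L * h / T * (∫ X, |X| ^ 3 ∂(gaussianReal 0 1))
      = 2 * Real.sqrt (2 / Real.pi) * L * h / T := by
  have hE_cont : Continuous E := by
    have hlip : LipschitzWith (Real.toNNReal L) E :=
      LipschitzWith.of_dist_le_mul fun u v => by
        rw [Real.dist_eq, Real.dist_eq, Real.coe_toNNReal L hL]
        exact hE_lip u v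
    exact hlip.continuous
  set m : ℝ → ℝ := fun y => min 1 (Real.exp (-(E (x + h * y) - E x) / T)) with hm_def
  have hm_cont : Continuous m := by
    apply continuous_const.min
    exact (((hE_cont.comp (continuous_const.add (continuous_const.mul continuous_id))).sub
      continuous_const).neg.div_const T).rexp
  have hm_nonneg : ∀ y, 0 ≤ m y := fun y =>
    le_min zero_le_one (Real.exp_pos _).le
  have hm_le_one : ∀ y, m y ≤ 1 := fun y => min_le_left _ _
  -- pointwise key bound
  have key : ∀ y : ℝ, |y ^ 2 * m y - y ^ 2| ≤ L * h / T * |y| ^ 3 := by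
    intro y
    have h1 : |y ^ 2 * m y - y ^ 2| = y ^ 2 * |m y - 1| := by
      rw [show y ^ 2 * m y - y ^ 2 = y ^ 2 * (m y - 1) by ring, abs_mul, abs_of_nonneg (sq_nonneg y)]
    have h2 : |m y - 1| ≤ |(-(E (x + h * y) - E x) / T)| := SA.min_one_exp_lip _
    have h3 : |(-(E (x + h * y) - E x) / T)| ≤ L * h * |y| / T := by
      rw [abs_div, abs_neg, abs_of_pos hT]
      have hnum : |E (x + h * y) - E x| ≤ L * h * |y| := by
        calc |E (x + h * y) - E x| ≤ L * |x + h * y - x| := hE_lip _ _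
          _ = L * (h * |y|) := by
              rw [show x + h * y - x = h * y by ring, abs_mul, abs_of_pos hh]
          _ = L * h * |y| := by ring
      exact div_le_div_of_nonneg_right hnum hT.le |>.trans_eq rfl
    calc |y ^ 2 * m y - y ^ 2| = y ^ 2 * |m y - 1| := h1
      _ ≤ y ^ 2 * (L * h * |y| / T) := by
          apply mul_le_mul_of_nonneg_left (h2.trans h3) (sq_nonneg y)
      _ = L * h / T * |y| ^ 3 := by
          rw [show |y| ^ 3 = |y| ^ 2 * |y| by ring, sq_abs]
          ring
  -- move integrals to Lebesgue form
  rw [SA.integral_gaussian_eq, SA.integral_gaussian_eq]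
  set φ : ℝ → ℝ := gaussianPDFReal 0 1 with hφ_def
  have hφ_meas : Measurable φ := measurable_gaussianPDFReal 0 1
  have Iφ2 : Integrable fun y : ℝ => φ y * y ^ 2 := by
    refine ((SA.int_pow 2).const_mul (Real.sqrt (2 * Real.pi))⁻¹).congr
      (Filter.EventuallyEq.of_eq (funext fun y => ?_))
    rw [hφ_def, SA.pdf_eq]; ring
  have Iφ3 : Integrable fun y : ℝ => φ y * |y| ^ 3 := by
    refine (SA.int_abs3.const_mul (Real.sqrt (2 * Real.pi))⁻¹).congr
      (Filter.EventuallyEq.of_eq (funext fun y => ?_))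
    rw [hφ_def, SA.pdf_eq]; ring
  have Iφm : Integrable fun y : ℝ => φ y * (y ^ 2 * m y) := by
    refine Iφ2.mono' ?_ (Filter.Eventually.of_forall fun y => ?_)
    · exact (hφ_meas.aestronglyMeasurable.mul
        ((continuous_pow 2).aestronglyMeasurable.mul hm_cont.aestronglyMeasurable))
    · rw [Real.norm_eq_abs, abs_mul, abs_of_nonneg (SA.pdf_nonneg y), abs_mul,
        abs_of_nonneg (sq_nonneg y), abs_of_nonneg (hm_nonneg y)]
      have := mul_le_of_le_one_right (sq_nonneg y) (hm_le_one y)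
      nlinarith [SA.pdf_nonneg y, sq_nonneg y, hm_le_one y, hm_nonneg y]
  constructor
  · have hbound : ‖∫ y : ℝ, (φ y * (y ^ 2 * m y) - φ y * y ^ 2)‖
        ≤ ∫ y : ℝ, L * h / T * (φ y * |y| ^ 3) := by
      refine norm_integral_le_of_norm_le (Iφ3.const_mul (L * h / T))
        (Filter.Eventually.of_forall fun y => ?_)
      rw [Real.norm_eq_abs, show φ y * (y ^ 2 * m y) - φ y * y ^ 2
        = φ y * (y ^ 2 * m y - y ^ 2) by ring, abs_mul, abs_of_nonneg (SA.pdf_nonneg y)]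
      calc φ y * |y ^ 2 * m y - y ^ 2| ≤ φ y * (L * h / T * |y| ^ 3) :=
            mul_le_mul_of_nonneg_left (key y) (SA.pdf_nonneg y)
        _ = L * h / T * (φ y * |y| ^ 3) := by ring
    rw [integral_sub Iφm Iφ2, SA.moment2] at hbound
    rw [integral_const_mul] at hbound
    simpa only [Real.norm_eq_abs] using hbound
  · rw [hφ_def, SA.moment3]
    ring
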